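/- arXiv:1310.2740 — 2 statements merged into one kernel-verified Lean document; each statement's English description precedes it below -/
import Mathlib

section
/- Bowen's dimensional entropy scales under powers: for a continuous map f : X → X on a compact metrizable space, Y ⊂ X, and any integer m > 0, h_X(f^m, Y) = m · h_X(f, Y). -/
/-! Write `n_U^f(E)` for Bowen's order of `E`. If `E` is subordinate to `U`, then
`n_U^f(E) ≤ m · n_U^{f^m}(E) + (m - 1)`, so `exp(-mλ n_U^{f^m}(E)) ≤ e^{λ(m-1)} exp(-λ n_U^f(E))`
and `m_{U,λ}(f, Y) = 0` forces `m_{U,mλ}(f^m, Y) = 0`: `h_U(f^m, Y) ≤ m h_U(f, Y)`. Conversely, for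
the refinement `U^m = U ∨ f⁻¹U ∨ ⋯ ∨ f^{-(m-1)}U`, which is again a finite open cover because `f`
is continuous, `m · n_{U^m}^{f^m}(E) ≤ n_U^f(E)`, hence `m_{U,λ}(f, Y) ≤ m_{U^m,mλ}(f^m, Y)` and
`m h_U(f, Y) ≤ h_{U^m}(f^m, Y)`. Multiplication by `m` commutes with the supremum over covers. -/

open Set Filter Topology
open scoped Classical ENNReal

variable {X : Type*} [TopologicalSpace X]

/-- A finite open cover of the space. -/
def IsFiniteOpenCover (U : Finset (Set X)) : Prop :=
  (∀ V ∈ U, IsOpen V) ∧ ⋃₀ (U : Set (Set X)) = Set.univ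

/-- `E` is subordinate to the cover `U`: it is contained in an element of `U`. -/
def Subord (U : Finset (Set X)) (E : Set X) : Prop := ∃ V ∈ U, E ⊆ V

/-- Bowen's `n_U(E)`: the largest `k` such that `f^j(E)` is subordinate to `U`
for all `0 ≤ j ≤ k` (and `0` if `E` itself is not subordinate). -/
noncomputable def bowenN (f : X → X) (U : Finset (Set X)) (E : Set X) : ℕ∞ :=
  if Subord U E then
    sSup {k : ℕ∞ | ∀ j : ℕ, (j : ℕ∞) ≤ k → Subord U (f^[j] '' E)}
  else 0

/-- The weight `exp(-lam * n)`, with the natural conventions at `n = ∞`. -/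
noncomputable def expWeight (lam : ℝ) (n : ℕ∞) : ℝ≥0∞ :=
  WithTop.recTopCoe (if 0 < lam then 0 else if lam < 0 then ⊤ else 1)
    (fun k : ℕ => ENNReal.ofReal (Real.exp (-lam * k))) n

/-- Bowen's measure `m_{U,lam}(Y)`. -/
noncomputable def bowenM (f : X → X) (U : Finset (Set X)) (lam : ℝ) (Y : Set X) : ℝ≥0∞ :=
  ⨆ N : ℕ, ⨅ (C : ℕ → Set X) (_ : Y ⊆ ⋃ i, C i)
    (_ : ∀ i, (N : ℕ∞) ≤ bowenN f U (C i)),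
      ∑' i, expWeight lam (bowenN f U (C i))

/-- Bowen's entropy `h_U(f,Y) = inf { lam : m_{U,lam}(Y) = 0 }`. -/
noncomputable def bowenHU (f : X → X) (U : Finset (Set X)) (Y : Set X) : EReal :=
  ⨅ (lam : ℝ) (_ : bowenM f U lam Y = 0), (lam : EReal)

/-- Bowen's dimensional entropy `h_X(f,Y)`. -/
noncomputable def bowenH (f : X → X) (Y : Set X) : EReal :=
  ⨆ (U : Finset (Set X)) (_ : IsFiniteOpenCover U), bowenHU f U Y

section bowenN

variable {α : Type*} {f : α → α} {U : Finset (Set α)} {E : Set α}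

lemma subord_of_bowenN_ne_zero (h : bowenN f U E ≠ 0) : Subord U E := by
  by_contra hE
  exact h (if_neg hE)

lemma le_bowenN_iff (hE : Subord U E) {k : ℕ∞} :
    k ≤ bowenN f U E ↔ ∀ j : ℕ, (j : ℕ∞) ≤ k → Subord U (f^[j] '' E) := by
  rw [bowenN, if_pos hE]
  refine ⟨fun hk j hj => ?_, fun h => le_sSup h⟩
  by_contra hj'
  obtain ⟨i, rfl⟩ : ∃ i, j = i + 1 :=
    Nat.exists_eq_succ_of_ne_zero (by rintro rfl; exact hj' (by simpa using hE))
  have hbound : sSup {k : ℕ∞ | ∀ j : ℕ, (j : ℕ∞) ≤ k → Subord U (f^[j] '' E)} ≤ i := by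
    refine sSup_le fun k' hk' => le_of_not_gt fun hik' => hj' (hk' (i + 1) ?_)
    exact_mod_cast Order.add_one_le_of_lt hik'
  have := (hj.trans hk).trans hbound
  norm_cast at this
  omega

lemma le_bowenN_iterate_of_mul_le (hE : Subord U E) {m j : ℕ}
    (h : ((m * j : ℕ) : ℕ∞) ≤ bowenN f U E) : (j : ℕ∞) ≤ bowenN (f^[m]) U E := by
  refine (le_bowenN_iff hE).2 fun i hi => ?_
  rw [← Function.iterate_mul]
  refine (le_bowenN_iff hE).1 h (m * i) ?_
  exact_mod_cast Nat.mul_le_mul_left m (by exact_mod_cast hi)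

lemma bowenN_le_mul_bowenN_iterate_add {m : ℕ} (hm : 0 < m) (hE : Subord U E) :
    bowenN f U E ≤ m * bowenN (f^[m]) U E + (m - 1 : ℕ) := by
  cases hk : bowenN (f^[m]) U E with
  | top => simp [ENat.mul_top (Nat.cast_ne_zero.2 hm.ne')]
  | coe k =>
    by_contra! hlt
    have hsucc : ((m * (k + 1) : ℕ) : ℕ∞) ≤ bowenN f U E := by
      rw [show m * (k + 1) = m * k + (m - 1) + 1 by rw [Nat.mul_succ]; omega]
      exact_mod_cast Order.add_one_le_of_lt hlt
    have := hk ▸ le_bowenN_iterate_of_mul_le hE hsucc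
    norm_cast at this
    omega

end bowenN

section refineCover

variable {α : Type*} {f : α → α} {m : ℕ} {U : Finset (Set α)} {E : Set α}

noncomputable def refineCover (f : α → α) (m : ℕ) (U : Finset (Set α)) : Finset (Set α) :=
  (Fintype.piFinset fun _ : Fin m => U).image fun g => ⋂ i : Fin m, f^[i] ⁻¹' g i

lemma subord_image_iterate_of_subord_refineCover (h : Subord (refineCover f m U) E)
    {r : ℕ} (hr : r < m) : Subord U (f^[r] '' E) := by
  obtain ⟨V, hV, hEV⟩ := h
  obtain ⟨g, hg, rfl⟩ := Finset.mem_image.1 hV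
  exact show ∃ V ∈ U, _ from ⟨g ⟨r, hr⟩, Fintype.mem_piFinset.1 hg _,
    image_subset_iff.2 (hEV.trans (iInter_subset (fun i : Fin m => f^[i] ⁻¹' g i) ⟨r, hr⟩))⟩

lemma mul_bowenN_iterate_refineCover_le (hm : 0 < m) (hE : Subord (refineCover f m U) E) :
    m * bowenN (f^[m]) (refineCover f m U) E ≤ bowenN f U E := by
  have hU : Subord U E := by simpa using subord_image_iterate_of_subord_refineCover hE hm
  refine (le_bowenN_iff hU).2 fun j hj => ?_
  obtain ⟨q, r, hr, rfl⟩ : ∃ q r, r < m ∧ j = m * q + r :=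
    ⟨j / m, j % m, Nat.mod_lt _ hm, (Nat.div_add_mod j m).symm⟩
  have hq : (q : ℕ∞) ≤ bowenN (f^[m]) (refineCover f m U) E := by
    cases hk : bowenN (f^[m]) (refineCover f m U) E with
    | top => exact le_top
    | coe k =>
      rw [hk] at hj
      norm_cast at hj ⊢
      exact Nat.le_of_mul_le_mul_left (le_of_add_le_left hj) hm
  have hsub := (le_bowenN_iff hE).1 hq q le_rfl
  rw [← Function.iterate_mul] at hsub
  have := subord_image_iterate_of_subord_refineCover hsub hr
  rwa [← image_comp, ← Function.iterate_add, Nat.add_comm] at this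

end refineCover

lemma isFiniteOpenCover_refineCover {f : X → X} {m : ℕ} {U : Finset (Set X)} (hf : Continuous f)
    (hU : IsFiniteOpenCover U) :
    IsFiniteOpenCover (refineCover f m U) := by
  refine ⟨fun V hV => ?_, eq_univ_of_forall fun x => ?_⟩
  · obtain ⟨g, hg, rfl⟩ := Finset.mem_image.1 hV
    exact isOpen_iInter_of_finite fun i =>
      (hU.1 _ (Fintype.mem_piFinset.1 hg i)).preimage (hf.iterate _)
  · have hx : ∀ i : Fin m, ∃ V ∈ U, f^[i] x ∈ V := fun i => by
      have : f^[i] x ∈ ⋃₀ (U : Set (Set X)) := hU.2 ▸ mem_univ _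
      simpa using this
    choose g hgU hgx using hx
    refine mem_sUnion.2 ⟨⋂ i : Fin m, f^[i] ⁻¹' g i, ?_, mem_iInter.2 hgx⟩
    exact Finset.mem_coe.2 (Finset.mem_image_of_mem _ (Fintype.mem_piFinset.2 hgU))

section expWeight

@[simp] lemma expWeight_coe (lam : ℝ) (k : ℕ) :
    expWeight lam k = ENNReal.ofReal (Real.exp (-lam * k)) := rfl

@[simp] lemma expWeight_top (lam : ℝ) :
    expWeight lam ⊤ = if 0 < lam then 0 else if lam < 0 then ⊤ else 1 := rfl

lemma expWeight_antitone {lam : ℝ} (hlam : 0 ≤ lam) : Antitone (expWeight lam) := by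
  intro n n' h
  cases n' with
  | top =>
    rcases hlam.eq_or_lt with rfl | hlam
    · cases n <;> simp
    · simp [hlam]
  | coe k' =>
    obtain ⟨k, rfl, hk⟩ := ENat.le_natCast_iff.1 h
    have hk' : (k : ℝ) ≤ k' := Nat.cast_le.2 hk
    exact ENNReal.ofReal_le_ofReal (Real.exp_le_exp.2 (by nlinarith))

lemma expWeight_mul {lam : ℝ} {m : ℕ} (hm : 0 < m) (n : ℕ∞) :
    expWeight (m * lam) n = expWeight lam (m * n) := by
  have hmR : (0 : ℝ) < m := Nat.cast_pos.2 hm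
  cases n with
  | top =>
    simp [ENat.mul_top (Nat.cast_ne_zero.2 hm.ne'), mul_pos_iff_of_pos_left hmR, mul_neg_iff, hmR,
      not_lt.2 hmR.le]
  | coe k =>
    rw [← Nat.cast_mul, expWeight_coe, expWeight_coe]
    push_cast
    ring_nf

lemma expWeight_le_mul_expWeight_add {lam : ℝ} (hlam : 0 ≤ lam) (n : ℕ∞) (c : ℕ) :
    expWeight lam n ≤ ENNReal.ofReal (Real.exp (lam * c)) * expWeight lam (n + c) := by
  cases n with
  | top =>
    rcases hlam.eq_or_lt with rfl | hlam
    · simp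
    · simp [hlam]
  | coe k =>
    rw [← Nat.cast_add, expWeight_coe, expWeight_coe, ← ENNReal.ofReal_mul (Real.exp_nonneg _),
      ← Real.exp_add]
    refine (congrArg (ENNReal.ofReal ∘ Real.exp) ?_).le
    push_cast
    ring

lemma one_le_expWeight {lam : ℝ} (hlam : lam ≤ 0) (n : ℕ∞) : 1 ≤ expWeight lam n := by
  cases n with
  | top =>
    rw [expWeight_top, if_neg (not_lt.2 hlam)]
    split_ifs <;> simp
  | coe k =>
    rw [expWeight_coe, ENNReal.one_le_ofReal, Real.one_le_exp_iff]
    exact mul_nonneg (neg_nonneg.2 hlam) k.cast_nonneg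

end expWeight

section bowenM

variable {α : Type*} {f g : α → α} {U V : Finset (Set α)} {lam mu : ℝ} {Y : Set α} {m : ℕ}

lemma bowenM_le_mul_bowenM {c : ℝ≥0∞} (hc₀ : c ≠ 0) (hc : c ≠ ⊤) (level : ℕ → ℕ)
    (h : ∀ N E, (level N : ℕ∞) ≤ bowenN f U E →
      (N : ℕ∞) ≤ bowenN g V E ∧ expWeight mu (bowenN g V E) ≤ c * expWeight lam (bowenN f U E)) :
    bowenM g V mu Y ≤ c * bowenM f U lam Y := by
  refine iSup_le fun N => le_trans ?_ (mul_le_mul_right (le_iSup _ (level N)) c)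
  simp only [ENNReal.mul_iInf_of_ne hc₀ hc, ← ENNReal.tsum_mul_left]
  refine le_iInf fun C => le_iInf fun hY => le_iInf fun hC => ?_
  exact iInf_le_of_le C <| iInf_le_of_le hY <| iInf_le_of_le (fun i => (h N _ (hC i)).1) <|
    ENNReal.tsum_le_tsum fun i => (h N _ (hC i)).2

lemma pos_of_bowenM_eq_zero (h : bowenM f U lam Y = 0) : 0 < lam := by
  by_contra! hlam
  have htop : ⊤ ≤ bowenM f U lam Y :=
    le_iSup_of_le 0 <| le_iInf fun C => le_iInf fun _ => le_iInf fun _ =>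
      calc (⊤ : ℝ≥0∞) = ∑' _ : ℕ, 1 := (ENNReal.tsum_const_eq_top_of_ne_zero one_ne_zero).symm
        _ ≤ _ := ENNReal.tsum_le_tsum fun i => one_le_expWeight hlam _
  exact ENNReal.top_ne_zero ((top_le_iff.1 htop).symm.trans h)

lemma bowenM_iterate_le (hm : 0 < m) (hlam : 0 ≤ lam) :
    bowenM (f^[m]) U (m * lam) Y ≤
      ENNReal.ofReal (Real.exp (lam * (m - 1 : ℕ))) * bowenM f U lam Y := by
  refine bowenM_le_mul_bowenM (ENNReal.ofReal_pos.2 (Real.exp_pos _)).ne' ENNReal.ofReal_ne_top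
    (fun N => m * N + 1) fun N E hE => ?_
  have hS : Subord U E :=
    subord_of_bowenN_ne_zero ((Nat.cast_pos.2 (Nat.succ_pos _)).trans_le hE).ne'
  refine ⟨le_bowenN_iterate_of_mul_le hS (le_trans (by exact_mod_cast (m * N).le_succ) hE), ?_⟩
  calc expWeight (m * lam) (bowenN (f^[m]) U E)
      = expWeight lam (m * bowenN (f^[m]) U E) := expWeight_mul hm _
    _ ≤ _ * expWeight lam (m * bowenN (f^[m]) U E + (m - 1 : ℕ)) :=
      expWeight_le_mul_expWeight_add hlam _ _
    _ ≤ _ := mul_le_mul_right (expWeight_antitone hlam (bowenN_le_mul_bowenN_iterate_add hm hS)) _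

lemma bowenM_le_bowenM_iterate_refineCover (hm : 0 < m) (hlam : 0 ≤ lam) :
    bowenM f U lam Y ≤ bowenM (f^[m]) (refineCover f m U) (m * lam) Y := by
  rw [← one_mul (bowenM (f^[m]) _ _ Y)]
  refine bowenM_le_mul_bowenM one_ne_zero ENNReal.one_ne_top
    (fun N => N + 1) fun N E hE => ?_
  have hS : Subord (refineCover f m U) E :=
    subord_of_bowenN_ne_zero ((Nat.cast_pos.2 (Nat.succ_pos _)).trans_le hE).ne'
  have hmul := mul_bowenN_iterate_refineCover_le hm hS
  refine ⟨?_, ?_⟩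
  · calc (N : ℕ∞) ≤ (N + 1 : ℕ) := by exact_mod_cast N.le_succ
      _ ≤ bowenN (f^[m]) (refineCover f m U) E := hE
      _ ≤ m * bowenN (f^[m]) (refineCover f m U) E :=
        le_mul_of_one_le_left zero_le (by exact_mod_cast hm)
      _ ≤ bowenN f U E := hmul
  · rw [one_mul, expWeight_mul hm]
    exact expWeight_antitone hlam hmul

end bowenM

noncomputable def EReal.mulLeftOrderIso (a : ℝ) (ha : 0 < a) : EReal ≃o EReal where
  toFun x := a * x
  invFun x := (a⁻¹ : ℝ) * x
  left_inv x := by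
    change ((a⁻¹ : ℝ) : EReal) * (a * x) = x
    rw [← mul_assoc, ← EReal.coe_mul, inv_mul_cancel₀ ha.ne', EReal.coe_one, one_mul]
  right_inv x := by
    change (a : EReal) * ((a⁻¹ : ℝ) * x) = x
    rw [← mul_assoc, ← EReal.coe_mul, mul_inv_cancel₀ ha.ne', EReal.coe_one, one_mul]
  map_rel_iff' {x y} := by
    change (a : EReal) * x ≤ a * y ↔ x ≤ y
    refine ⟨fun h => ?_, fun h => mul_le_mul_of_nonneg_left h (EReal.coe_nonneg.2 ha.le)⟩
    have := mul_le_mul_of_nonneg_left h (EReal.coe_nonneg.2 (inv_pos.2 ha).le)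
    simpa only [← mul_assoc, ← EReal.coe_mul, inv_mul_cancel₀ ha.ne', EReal.coe_one, one_mul]
      using this

section bowenHU

variable {α : Type*} {f g : α → α} {U V : Finset (Set α)} {Y : Set α} {a : ℝ}

lemma coe_mul_bowenHU (ha : 0 < a) :
    a * bowenHU f U Y = ⨅ (lam : ℝ) (_ : bowenM f U lam Y = 0), ((a * lam : ℝ) : EReal) := by
  change EReal.mulLeftOrderIso a ha _ = _
  simp only [bowenHU, OrderIso.map_iInf]
  rfl

lemma bowenHU_le_coe_mul (ha : 0 < a)
    (h : ∀ lam, 0 < lam → bowenM f U lam Y = 0 → bowenM g V (a * lam) Y = 0) :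
    bowenHU g V Y ≤ a * bowenHU f U Y := by
  rw [coe_mul_bowenHU ha, bowenHU]
  exact le_iInf₂ fun lam hlam => iInf₂_le (a * lam) (h lam (pos_of_bowenM_eq_zero hlam) hlam)

lemma coe_mul_bowenHU_le (ha : 0 < a)
    (h : ∀ lam, 0 < lam → bowenM g V (a * lam) Y = 0 → bowenM f U lam Y = 0) :
    a * bowenHU f U Y ≤ bowenHU g V Y := by
  rw [coe_mul_bowenHU ha, bowenHU]
  refine le_iInf₂ fun mu hmu => ?_
  have hmu' : a * (mu / a) = mu := mul_div_cancel₀ mu ha.ne'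
  refine iInf₂_le_of_le (mu / a) (h _ (div_pos (pos_of_bowenM_eq_zero hmu) ha) ?_)
    (congrArg _ hmu').le
  rwa [hmu']

end bowenHU

variable {f : X → X} {Y : Set X} in
lemma coe_mul_bowenH {a : ℝ} (ha : 0 < a) :
    a * bowenH f Y = ⨆ (U : Finset (Set X)) (_ : IsFiniteOpenCover U), a * bowenHU f U Y := by
  change EReal.mulLeftOrderIso a ha _ = _
  simp only [bowenH, OrderIso.map_iSup]
  rfl

theorem bowenH_iterate_general {X : Type*} [TopologicalSpace X]
    (f : X → X) (hf : Continuous f) (Y : Set X) (m : ℕ) (hm : 0 < m) :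
    bowenH (f^[m]) Y = (m : EReal) * bowenH f Y := by
  have hmR : (0 : ℝ) < m := Nat.cast_pos.2 hm
  rw [show (m : EReal) = ((m : ℝ) : EReal) by norm_cast, coe_mul_bowenH hmR]
  apply le_antisymm
  · refine iSup₂_le fun U hU => le_iSup₂_of_le U hU (bowenHU_le_coe_mul hmR fun lam hlam h0 => ?_)
    exact le_zero_iff.1 ((bowenM_iterate_le hm hlam.le).trans_eq (by rw [h0, mul_zero]))
  · refine iSup₂_le fun U hU => le_iSup₂_of_le (refineCover f m U)
      (isFiniteOpenCover_refineCover hf hU) (coe_mul_bowenHU_le hmR fun lam hlam h0 => ?_)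
    exact le_zero_iff.1 (h0 ▸ bowenM_le_bowenM_iterate_refineCover hm hlam.le)

/-- Bowen's dimensional entropy scales under powers. -/
theorem bowenH_iterate {X : Type*} [TopologicalSpace X] [CompactSpace X]
    [TopologicalSpace.MetrizableSpace X]
    (f : X → X) (hf : Continuous f) (Y : Set X) (m : ℕ) (hm : 0 < m) :
    bowenH (f^[m]) Y = (m : EReal) * bowenH f Y :=
  bowenH_iterate_general f hf Y m hm
end

section
/- Let π : Z → X be a one-block factor map between SFTs with Φ^{-1}(b) = {a} for a symbol b (a magic symbol with unique preimage symbol), and suppose π is left-closing with closing constant K (i.e., if π(z)[−K,K] = π(z')[−K,K] and z[0,K] = z'[0,K] then z_{−1} = z'_{−1}). Let Z' = { z ∈ Z : z_n = a for infinitely many n ≥ 0 and infinitely many n ≤ 0 } and X' = π(Z'). Then the restriction π|_{Z'} : Z' → X' is a homeomorphism (with respect to the subspace topologies), and in particular its inverse is continuous: for every x ∈ X' there exists N such that x[−N,N] determines π^{-1}(x)_0. -/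
open Set Filter Topology

/-- The shift map on bi-infinite sequences. -/
def shiftMap {A : Type*} : (ℤ → A) → (ℤ → A) := fun x n => x (n + 1)

/-- The inverse shift map. -/
def shiftInv {A : Type*} : (ℤ → A) → (ℤ → A) := fun x n => x (n - 1)

/-- A subshift: a closed, shift-invariant subset of the full shift. -/
def IsSubshift {A : Type*} [TopologicalSpace A] (Z : Set (ℤ → A)) : Prop :=
  IsClosed Z ∧ shiftMap '' Z = Z

/-- The set `W_n(Y)` of words of length `n` appearing (at position `0`) in points of `Y`. -/
def wordSet {A : Type*} (n : ℕ) (Y : Set (ℤ → A)) : Set (Fin n → A) :=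
  { w | ∃ y ∈ Y, ∀ i : Fin n, y (i : ℤ) = w i }


/-! Left-closing with constant `K` lets agreement of two preimages on `[m, m + K]` spread to
`m - 1` as long as their images agree on `[m - K, m + K]`; iterating, agreement on a right ray
spreads down to `K` beyond the left end of any ray on which the images agree. If `z` sees the
magic preimage `a` at some `n ≥ k`, any other preimage of a long enough window of `π z` also
passes through `a` at `n`, so splicing it with `z` at `n` and propagating down shows that it
agrees with `z` at `k`. Thus finite windows of `π z` determine every coordinate of `z ∈ Z'`,
which gives both injectivity of `π` on `Z'` and continuity of the inverse. -/

section

variable {A B : Type*}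

def vertexShift (T : A → A → Prop) : Set (ℤ → A) := {z | ∀ i : ℤ, T (z i) (z (i + 1))}

def IsLeftClosingWith (Φ : A → B) (Z : Set (ℤ → A)) (K : ℕ) : Prop :=
  ∀ z ∈ Z, ∀ z' ∈ Z,
    (∀ i : ℤ, -(K : ℤ) ≤ i → i ≤ (K : ℤ) → Φ (z i) = Φ (z' i)) →
    (∀ i : ℤ, 0 ≤ i → i ≤ (K : ℤ) → z i = z' i) → z (-1) = z' (-1)

namespace vertexShift

variable {T : A → A → Prop}

theorem translate_mem {z : ℤ → A} (hz : z ∈ vertexShift T) (m : ℤ) :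
    (fun i => z (i + m)) ∈ vertexShift T := fun i => by
  simpa only [add_right_comm] using hz (i + m)

theorem splice_mem {z z' : ℤ → A} (hz : z ∈ vertexShift T) (hz' : z' ∈ vertexShift T) {n : ℤ}
    (hn : z n = z' n) : (fun j => if j < n then z j else z' j) ∈ vertexShift T := by
  intro j
  rcases lt_trichotomy (j + 1) n with hlt | heq | hgt
  · simpa only [if_pos hlt, if_pos (show j < n by omega)] using hz j
  · simpa only [if_neg (show ¬ j + 1 < n by omega), if_pos (show j < n by omega), heq, ← hn,
      ite_self] using hz j
  · simpa only [if_neg (show ¬ j + 1 < n by omega), if_neg (show ¬ j < n by omega)] using hz' j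

end vertexShift

namespace IsLeftClosingWith

variable {Φ : A → B} {Z : Set (ℤ → A)} {K : ℕ}

theorem eq_sub_one (hK : IsLeftClosingWith Φ Z K)
    (hshift : ∀ z ∈ Z, ∀ m : ℤ, (fun i => z (i + m)) ∈ Z)
    {z z' : ℤ → A} (hz : z ∈ Z) (hz' : z' ∈ Z) (m : ℤ)
    (himg : ∀ i : ℤ, m - K ≤ i → i ≤ m + K → Φ (z i) = Φ (z' i))
    (hagree : ∀ i : ℤ, m ≤ i → i ≤ m + K → z i = z' i) :
    z (m - 1) = z' (m - 1) := by
  have := hK _ (hshift z hz m) _ (hshift z' hz' m)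
    (fun i h₁ h₂ => himg (i + m) (by omega) (by omega))
    (fun i h₁ h₂ => hagree (i + m) (by omega) (by omega))
  rwa [neg_add_eq_sub] at this

theorem eq_of_eq_on_ray (hK : IsLeftClosingWith Φ Z K)
    (hshift : ∀ z ∈ Z, ∀ m : ℤ, (fun i => z (i + m)) ∈ Z)
    {z z' : ℤ → A} (hz : z ∈ Z) (hz' : z' ∈ Z) {M n : ℤ}
    (himg : ∀ i : ℤ, M ≤ i → Φ (z i) = Φ (z' i))
    (hagree : ∀ i : ℤ, n ≤ i → z i = z' i) :
    ∀ i : ℤ, M + K ≤ i → z i = z' i := by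
  have hdown : ∀ m ≤ n, M + K ≤ m → ∀ i, m ≤ i → z i = z' i := by
    refine Int.leInductionDown (fun _ => hagree) fun m _ ih hm i hi => ?_
    rcases hi.eq_or_lt with rfl | hlt
    · exact hK.eq_sub_one hshift hz hz' m (fun j hj _ => himg j (by omega))
        (fun j hj _ => ih (by omega) j hj)
    · exact ih (by omega) i (by omega)
  intro i hi
  rcases le_total i n with hin | hni
  · exact hdown i hin hi i le_rfl
  · exact hagree i hni

end IsLeftClosingWith

variable {T : A → A → Prop} {Φ : A → B} {K : ℕ}

theorem eq_of_image_eq_of_eq_at (hK : IsLeftClosingWith Φ (vertexShift T) K)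
    {z z' : ℤ → A} (hz : z ∈ vertexShift T) (hz' : z' ∈ vertexShift T) {M n : ℤ}
    (hn : z' n = z n) (himg : ∀ j : ℤ, M ≤ j → j ≤ n → Φ (z' j) = Φ (z j)) :
    ∀ i : ℤ, M + K ≤ i → i ≤ n → z' i = z i := by
  intro i hi hin
  have hsplice := hK.eq_of_eq_on_ray (fun _ h m => vertexShift.translate_mem h m)
    (vertexShift.splice_mem hz' hz hn) hz (M := M) (n := n)
    (fun j hj => by
      by_cases hjn : j < n
      · simpa only [if_pos hjn] using himg j hj hjn.le
      · simp only [if_neg hjn])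
    (fun j hj => by simp only [if_neg (not_lt.2 hj)]) i hi
  rcases hin.lt_or_eq with hlt | rfl
  · simpa only [if_pos hlt] using hsplice
  · exact hn

theorem exists_window_determines {a : A} (hmagic : ∀ c, Φ c = Φ a → c = a)
    (hK : IsLeftClosingWith Φ (vertexShift T) K) {z : ℤ → A} (hz : z ∈ vertexShift T)
    (hrec : ∀ N : ℤ, ∃ n : ℤ, N ≤ n ∧ z n = a) (k : ℤ) :
    ∃ N : ℕ, ∀ z' ∈ vertexShift T,
      (∀ i : ℤ, -(N : ℤ) ≤ i → i ≤ N → Φ (z' i) = Φ (z i)) → z' k = z k := by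
  obtain ⟨n, hkn, hn⟩ := hrec (max k 0)
  refine ⟨n.toNat + K + k.natAbs, fun z' hz' hwin => ?_⟩
  have hz'n : z' n = z n := hn ▸ hmagic _ (hn ▸ hwin n (by omega) (by omega))
  exact eq_of_image_eq_of_eq_at hK hz hz' hz'n (fun j hj hjn => hwin j hj (by omega))
    k (by omega) (by omega)

theorem continuous_of_exists_window [TopologicalSpace A] [DiscreteTopology A]
    [TopologicalSpace B] [DiscreteTopology B] {S : Set (ℤ → B)} {g : S → ℤ → A}
    (h : ∀ x : S, ∀ k : ℤ, ∃ N : ℕ, ∀ x' : S,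
      (∀ i : ℤ, -(N : ℤ) ≤ i → i ≤ N → x'.val i = x.val i) → g x' k = g x k) :
    Continuous g := by
  refine continuous_pi fun k => continuous_iff_continuousAt.2 fun x => ?_
  obtain ⟨N, hN⟩ := h x k
  have hcoord : ∀ i : ℤ, ∀ᶠ x' in 𝓝 x, x'.val i = x.val i := fun i =>
    ((continuous_apply i).comp continuous_subtype_val).continuousAt.preimage_mem_nhds
      ((isOpen_discrete {x.val i}).mem_nhds rfl)
  rw [ContinuousAt, nhds_discrete A, tendsto_pure]
  filter_upwards [(eventually_all_finset (Finset.Icc (-(N : ℤ)) N)).2 fun i _ => hcoord i]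
    with x' hx'
  exact hN x' fun i h₁ h₂ => hx' i (Finset.mem_Icc.2 ⟨h₁, h₂⟩)

end

theorem oneBlock_restriction_homeomorph_general {A B : Type*}
    [TopologicalSpace A] [DiscreteTopology A] [TopologicalSpace B] [DiscreteTopology B]
    (T : A → A → Prop) (Z : Set (ℤ → A))
    (hZdef : Z = {z : ℤ → A | ∀ i : ℤ, T (z i) (z (i + 1))})
    (Φ : A → B) (a : A) (b : B) (hb : Φ ⁻¹' {b} = {a})
    (K : ℕ)
    -- left-closing with closing constant `K`
    (hK : ∀ z ∈ Z, ∀ z' ∈ Z,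
      (∀ i : ℤ, -(K : ℤ) ≤ i → i ≤ (K : ℤ) → Φ (z i) = Φ (z' i)) →
      (∀ i : ℤ, 0 ≤ i → i ≤ (K : ℤ) → z i = z' i) → z (-1) = z' (-1)) :
    ∃ e : ({z ∈ Z | (∀ N : ℤ, ∃ n : ℤ, N ≤ n ∧ z n = a) ∧
              (∀ N : ℤ, ∃ n : ℤ, n ≤ N ∧ z n = a)} : Set (ℤ → A)) ≃ₜ
          ((fun z : ℤ → A => fun n : ℤ => Φ (z n)) ''
            {z ∈ Z | (∀ N : ℤ, ∃ n : ℤ, N ≤ n ∧ z n = a) ∧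
              (∀ N : ℤ, ∃ n : ℤ, n ≤ N ∧ z n = a)} : Set (ℤ → B)),
      (∀ z, ((e z : ℤ → B)) = fun n : ℤ => Φ ((z : ℤ → A) n)) ∧
      (∀ x ∈ (fun z : ℤ → A => fun n : ℤ => Φ (z n)) ''
            {z ∈ Z | (∀ N : ℤ, ∃ n : ℤ, N ≤ n ∧ z n = a) ∧
              (∀ N : ℤ, ∃ n : ℤ, n ≤ N ∧ z n = a)},
        ∃ N : ℕ, ∀ x' ∈ (fun z : ℤ → A => fun n : ℤ => Φ (z n)) ''
            {z ∈ Z | (∀ N : ℤ, ∃ n : ℤ, N ≤ n ∧ z n = a) ∧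
              (∀ N : ℤ, ∃ n : ℤ, n ≤ N ∧ z n = a)},
          (∀ i : ℤ, -(N : ℤ) ≤ i → i ≤ (N : ℤ) → x' i = x i) →
          ∀ z ∈ {z ∈ Z | (∀ N : ℤ, ∃ n : ℤ, N ≤ n ∧ z n = a) ∧
              (∀ N : ℤ, ∃ n : ℤ, n ≤ N ∧ z n = a)},
          ∀ z' ∈ {z ∈ Z | (∀ N : ℤ, ∃ n : ℤ, N ≤ n ∧ z n = a) ∧
              (∀ N : ℤ, ∃ n : ℤ, n ≤ N ∧ z n = a)},
            (fun n : ℤ => Φ (z n)) = x → (fun n : ℤ => Φ (z' n)) = x' →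
            z 0 = z' 0) := by
  subst hZdef
  set Z' := {z ∈ vertexShift T | (∀ N : ℤ, ∃ n : ℤ, N ≤ n ∧ z n = a) ∧
    (∀ N : ℤ, ∃ n : ℤ, n ≤ N ∧ z n = a)}
  set π : (ℤ → A) → ℤ → B := fun z n => Φ (z n)
  have hfiber : ∀ c, Φ c = b ↔ c = a := fun c => Set.ext_iff.1 hb c
  have hmagic : ∀ c, Φ c = Φ a → c = a := fun c hc =>
    (hfiber c).1 (hc.trans ((hfiber a).2 rfl))
  have hdet (z : ℤ → A) (hz : z ∈ Z') := exists_window_determines hmagic hK hz.1 hz.2.1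
  have hinj : InjOn π Z' := fun z hz z' hz' h => funext fun k => by
    obtain ⟨N, hN⟩ := hdet z' hz' k
    exact hN z hz.1 fun i _ _ => congrFun h i
  let e := Equiv.Set.imageOfInjOn π Z' hinj
  have hπ_symm (x : π '' Z') (i : ℤ) : Φ ((e.symm x).val i) = x.val i :=
    congrFun (congrArg Subtype.val (e.apply_symm_apply x)) i
  have hcont : Continuous e := Continuous.subtype_mk (continuous_pi fun n =>
    continuous_of_discreteTopology.comp ((continuous_apply n).comp continuous_subtype_val)) _
  have hinv : Continuous e.symm := continuous_induced_rng.2 <|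
    continuous_of_exists_window fun x k => by
      obtain ⟨N, hN⟩ := hdet _ (e.symm x).2 k
      refine ⟨N, fun x' hx' => hN _ (e.symm x').2.1 fun i h₁ h₂ => ?_⟩
      exact (hπ_symm x' i).trans ((hx' i h₁ h₂).trans (hπ_symm x i).symm)
  refine ⟨⟨e, hcont, hinv⟩, fun _ => rfl, ?_⟩
  rintro x ⟨z₀, hz₀, rfl⟩
  obtain ⟨N, hN⟩ := hdet z₀ hz₀ 0
  refine ⟨N, ?_⟩
  rintro x' - hwin z hz z' hz' hzx rfl
  rw [hinj hz hz₀ hzx, hN z' hz'.1 fun i h₁ h₂ => hwin i h₁ h₂]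

/-- for a left-closing one-block factor map with magic symbol `b` whose
unique preimage symbol is `a`, the restriction of the map to the set `Z'` of points seeing
`a` infinitely often in both time directions is a homeomorphism onto its image `X'`;
in particular the inverse is continuous: a finite central window of `x ∈ X'` determines
the zero coordinate of its preimage. -/
theorem oneBlock_restriction_homeomorph {A B : Type*} [Fintype A] [Fintype B]
    [TopologicalSpace A] [DiscreteTopology A] [TopologicalSpace B] [DiscreteTopology B]
    (T : A → A → Prop) (Z : Set (ℤ → A))
    (hZdef : Z = {z : ℤ → A | ∀ i : ℤ, T (z i) (z (i + 1))})
    (Φ : A → B) (a : A) (b : B) (hb : Φ ⁻¹' {b} = {a})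
    (K : ℕ)
    -- left-closing with closing constant `K`
    (hK : ∀ z ∈ Z, ∀ z' ∈ Z,
      (∀ i : ℤ, -(K : ℤ) ≤ i → i ≤ (K : ℤ) → Φ (z i) = Φ (z' i)) →
      (∀ i : ℤ, 0 ≤ i → i ≤ (K : ℤ) → z i = z' i) → z (-1) = z' (-1)) :
    ∃ e : ({z ∈ Z | (∀ N : ℤ, ∃ n : ℤ, N ≤ n ∧ z n = a) ∧
              (∀ N : ℤ, ∃ n : ℤ, n ≤ N ∧ z n = a)} : Set (ℤ → A)) ≃ₜ
          ((fun z : ℤ → A => fun n : ℤ => Φ (z n)) ''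
            {z ∈ Z | (∀ N : ℤ, ∃ n : ℤ, N ≤ n ∧ z n = a) ∧
              (∀ N : ℤ, ∃ n : ℤ, n ≤ N ∧ z n = a)} : Set (ℤ → B)),
      (∀ z, ((e z : ℤ → B)) = fun n : ℤ => Φ ((z : ℤ → A) n)) ∧
      (∀ x ∈ (fun z : ℤ → A => fun n : ℤ => Φ (z n)) ''
            {z ∈ Z | (∀ N : ℤ, ∃ n : ℤ, N ≤ n ∧ z n = a) ∧
              (∀ N : ℤ, ∃ n : ℤ, n ≤ N ∧ z n = a)},
        ∃ N : ℕ, ∀ x' ∈ (fun z : ℤ → A => fun n : ℤ => Φ (z n)) ''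
            {z ∈ Z | (∀ N : ℤ, ∃ n : ℤ, N ≤ n ∧ z n = a) ∧
              (∀ N : ℤ, ∃ n : ℤ, n ≤ N ∧ z n = a)},
          (∀ i : ℤ, -(N : ℤ) ≤ i → i ≤ (N : ℤ) → x' i = x i) →
          ∀ z ∈ {z ∈ Z | (∀ N : ℤ, ∃ n : ℤ, N ≤ n ∧ z n = a) ∧
              (∀ N : ℤ, ∃ n : ℤ, n ≤ N ∧ z n = a)},
          ∀ z' ∈ {z ∈ Z | (∀ N : ℤ, ∃ n : ℤ, N ≤ n ∧ z n = a) ∧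
              (∀ N : ℤ, ∃ n : ℤ, n ≤ N ∧ z n = a)},
            (fun n : ℤ => Φ (z n)) = x → (fun n : ℤ => Φ (z' n)) = x' →
            z 0 = z' 0) :=
  oneBlock_restriction_homeomorph_general T Z hZdef Φ a b hb K hK
end
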